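/- arXiv:2305.19083 — 2 statements merged into one kernel-verified Lean document; each statement's English description precedes it below -/
import Mathlib

section
/- Let p* be a path from s to t in a weighted graph G, and suppose the published weights w' make p* strictly longer than every other s–t path; equivalently, suppose p* is the longest s–t path. Then the set of edges an attacker must remove so that p* becomes the shortest s–t path consists of edges cutting every s–t path shorter than p*, and the iterative procedure that repeatedly increases the weight of an edge of a competing path by the length gap δ = ℓ(p) − ℓ(p*) terminates with w' a feasible point (i.e., the attacker's minimum-cost attack is well-defined and the weight-increase procedure produces weights under which every s–t path other than p* has length at least that of p*). -/
open SimpleGraph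

/-- Length of a walk with respect to edge weights `w`. -/
noncomputable def walkLen {V : Type*} {G : SimpleGraph V} (w : Sym2 V → ℝ) {s t : V}
    (p : G.Walk s t) : ℝ := (p.edges.map w).sum

/-!
Deleting `E` makes `p*` a shortest path exactly when `E` cuts every other path, because all
of those are strictly shorter than `p*`. For feasibility one round of the weight increase
suffices: a path other than `p*` has an edge off `p*` (paths are determined by their edge
sets), and adding `ℓ(p*)` to every such edge makes each competitor at least as long as `p*`,
whose own length is unchanged.
-/

namespace SimpleGraph.Walk

variable {V : Type*} {G : SimpleGraph V}

theorem IsPath.eq_of_edges_subset {s t : V} {p : G.Walk s t} (hp : p.IsPath) :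
    ∀ {q : G.Walk s t}, q.IsPath → q.edges ⊆ p.edges → q = p := by
  induction p with
  | nil =>
    intro q _ hsub
    have : q.length = 0 := by
      rw [← length_edges, List.eq_nil_of_subset_nil hsub, List.length_nil]
    exact eq_nil_iff_nil.mpr (length_eq_zero_iff.mp this)
  | @cons u v t h p ih =>
    intro q hq hsub
    obtain ⟨hp', hu⟩ := (cons_isPath_iff h p).mp hp
    cases q with
    | nil => exact absurd p.end_mem_support hu
    | @cons _ x _ h' q =>
      obtain ⟨hq', hu'⟩ := (cons_isPath_iff h' q).mp hq
      -- the first edge `s(u, x)` of `q` cannot lie further along `p`, which avoids `u`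
      have hx : x = v := by
        rcases List.mem_cons.mp (hsub (by simp : s(u, x) ∈ (cons h' q).edges)) with he | he
        · rcases Sym2.eq_iff.mp he with ⟨-, hxv⟩ | ⟨hux, -⟩
          · exact hxv
          · exact absurd hux h.ne
        · exact absurd (fst_mem_support_of_mem_edges p he) hu
      subst hx
      have hsub' : q.edges ⊆ p.edges := fun e he => by
        rcases List.mem_cons.mp (hsub (List.mem_cons_of_mem _ he)) with rfl | he'
        · exact absurd (fst_mem_support_of_mem_edges q he) hu'
        · exact he'
      rw [ih hp' hq' hsub']

theorem exists_mem_edges_notMem_of_ne {s t : V} {p q : G.Walk s t} (hp : p.IsPath)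
    (hq : q.IsPath) (hne : q ≠ p) : ∃ e ∈ q.edges, e ∉ p.edges := by
  by_contra! h
  exact hne (hp.eq_of_edges_subset hq h)

end SimpleGraph.Walk

section WalkLength

variable {V : Type*} {G H : SimpleGraph V} {s t : V}

theorem walkLen_transfer (w : Sym2 V → ℝ) (p : G.Walk s t)
    (hp : ∀ e ∈ p.edges, e ∈ H.edgeSet) :
    walkLen w (p.transfer H hp) = walkLen w p := by
  rw [walkLen, walkLen, Walk.edges_transfer]

theorem walkLen_nonneg {w : Sym2 V → ℝ} (hw : ∀ e, 0 ≤ w e) (p : G.Walk s t) :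
    0 ≤ walkLen w p :=
  List.sum_nonneg fun _ hx => by
    obtain ⟨e, -, rfl⟩ := List.mem_map.mp hx
    exact hw e

theorem walkLen_congr {w w₁ : Sym2 V → ℝ} (p : G.Walk s t)
    (h : ∀ e ∈ p.edges, w₁ e = w e) :
    walkLen w₁ p = walkLen w p :=
  congrArg List.sum (List.map_congr_left h)

end WalkLength

section Attack

variable {V : Type*} {G : SimpleGraph V} {s t : V}

theorem forall_walkLen_le_deleteEdges_iff {w : Sym2 V → ℝ} {p : G.Walk s t}
    (hlongest : ∀ q : G.Walk s t, q.IsPath → q ≠ p → walkLen w q < walkLen w p)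
    (E : Set (Sym2 V)) :
    (∀ q : (G.deleteEdges E).Walk s t, q.IsPath → walkLen w p ≤ walkLen w q) ↔
      ∀ q : G.Walk s t, q.IsPath → q ≠ p → ∃ e ∈ q.edges, e ∈ E := by
  constructor
  · intro hshortest q hq hne
    by_contra! hq_avoids
    have hq_edges : ∀ e ∈ q.edges, e ∈ (G.deleteEdges E).edgeSet := fun e he => by
      rw [edgeSet_deleteEdges]
      exact ⟨q.edges_subset_edgeSet he, hq_avoids e he⟩
    have := hshortest (q.transfer _ hq_edges) (hq.transfer hq_edges)
    rw [walkLen_transfer] at this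
    exact (hlongest q hq hne).not_ge this
  · intro hcut q hq
    have hq_edges : ∀ e ∈ q.edges, e ∈ G.edgeSet \ E := fun e he => by
      simpa only [edgeSet_deleteEdges] using q.edges_subset_edgeSet he
    have hq_edges_G : ∀ e ∈ q.edges, e ∈ G.edgeSet := fun e he => (hq_edges e he).1
    by_cases hqp : q.transfer G hq_edges_G = p
    · rw [← hqp, walkLen_transfer]
    · obtain ⟨e, he, heE⟩ := hcut _ (hq.transfer hq_edges_G) hqp
      rw [Walk.edges_transfer] at he
      exact absurd heE (hq_edges e he).2

end Attack

section WeightIncrease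

variable {V : Type*} {G : SimpleGraph V} {s t : V}

open Classical in
noncomputable def raiseOff (w : Sym2 V → ℝ) (p : G.Walk s t) (c : ℝ) : Sym2 V → ℝ :=
  fun e => if e ∈ p.edges then w e else w e + c

theorem raiseOff_of_mem {w : Sym2 V → ℝ} {p : G.Walk s t} {c : ℝ} {e : Sym2 V}
    (he : e ∈ p.edges) : raiseOff w p c e = w e := by
  simp [raiseOff, he]

theorem raiseOff_of_notMem {w : Sym2 V → ℝ} {p : G.Walk s t} {c : ℝ} {e : Sym2 V}
    (he : e ∉ p.edges) : raiseOff w p c e = w e + c := by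
  simp [raiseOff, he]

theorem le_raiseOff {w : Sym2 V → ℝ} (p : G.Walk s t) {c : ℝ} (hc : 0 ≤ c) (e : Sym2 V) :
    w e ≤ raiseOff w p c e := by
  by_cases he : e ∈ p.edges
  · rw [raiseOff_of_mem he]
  · rw [raiseOff_of_notMem he]
    linarith

theorem walkLen_raiseOff_self (w : Sym2 V → ℝ) (p : G.Walk s t) (c : ℝ) :
    walkLen (raiseOff w p c) p = walkLen w p :=
  walkLen_congr p fun _ he => raiseOff_of_mem he

theorem le_walkLen_raiseOff {w : Sym2 V → ℝ} (hw : ∀ e, 0 ≤ w e) {p q : G.Walk s t}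
    {c : ℝ} (hc : 0 ≤ c) (hp : p.IsPath) (hq : q.IsPath) (hne : q ≠ p) :
    c ≤ walkLen (raiseOff w p c) q := by
  obtain ⟨e, he, hep⟩ := Walk.exists_mem_edges_notMem_of_ne hp hq hne
  have hraised_nonneg : ∀ e', 0 ≤ raiseOff w p c e' := fun e' =>
    (hw e').trans (le_raiseOff p hc e')
  calc c ≤ raiseOff w p c e := by rw [raiseOff_of_notMem hep]; linarith [hw e]
    _ ≤ walkLen (raiseOff w p c) q :=
      List.single_le_sum (fun _ hx => by
        obtain ⟨e', -, rfl⟩ := List.mem_map.mp hx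
        exact hraised_nonneg e') _ (List.mem_map_of_mem he)

end WeightIncrease

theorem stmt2_general {V : Type*} (G : SimpleGraph V)
    (w' : Sym2 V → ℝ) (hw' : ∀ e, 0 < w' e)
    (s t : V) (pstar : G.Walk s t) (hps : pstar.IsPath)
    (hlongest : ∀ q : G.Walk s t, q.IsPath → q ≠ pstar → walkLen w' q < walkLen w' pstar) :
    (∀ E' : Finset (Sym2 V), ↑E' ⊆ G.edgeSet → (∀ e ∈ pstar.edges, e ∉ E') →
      ((∀ q : (G.deleteEdges ↑E').Walk s t, q.IsPath → walkLen w' pstar ≤ walkLen w' q) ↔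
        (∀ q : G.Walk s t, q.IsPath → q ≠ pstar → ∃ e ∈ q.edges, e ∈ E'))) ∧
    (∃ w'' : Sym2 V → ℝ, (∀ e, w' e ≤ w'' e) ∧ (∀ e ∈ pstar.edges, w'' e = w' e) ∧
      ∀ q : G.Walk s t, q.IsPath → q ≠ pstar → walkLen w'' pstar ≤ walkLen w'' q) := by
  have hw_nonneg : ∀ e, 0 ≤ w' e := fun e => (hw' e).le
  have hL := walkLen_nonneg hw_nonneg pstar
  refine ⟨fun E' _ _ => forall_walkLen_le_deleteEdges_iff hlongest E',
    raiseOff w' pstar (walkLen w' pstar), le_raiseOff pstar hL, fun _ he => raiseOff_of_mem he,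
    fun q hq hne => ?_⟩
  rw [walkLen_raiseOff_self]
  exact le_walkLen_raiseOff hw_nonneg hL hps hq hne

/-- If the published weights `w'` make `p*` strictly longer than every other simple
`s`–`t` path, then (i) an edge set (disjoint from `p*`, avoiding its edges) makes `p*`
the shortest `s`–`t` path iff it hits every other simple `s`–`t` path (all of which are
shorter than `p*`), so the attacker's minimum-cost attack is the minimum-cost such hitting
set; and (ii) the weight-increase procedure terminates: there exist weights, obtained from
`w'` by only increasing weights of edges off `p*`, under which every `s`–`t` path other
than `p*` has length at least that of `p*` (a feasible point for Zero-Sum Cut Defense). -/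
theorem stmt2 {V : Type*} [Fintype V] (G : SimpleGraph V) (hG : G.Connected)
    (w' : Sym2 V → ℝ) (hw' : ∀ e, 0 < w' e)
    (s t : V) (pstar : G.Walk s t) (hps : pstar.IsPath)
    (hlongest : ∀ q : G.Walk s t, q.IsPath → q ≠ pstar → walkLen w' q < walkLen w' pstar) :
    (∀ E' : Finset (Sym2 V), ↑E' ⊆ G.edgeSet → (∀ e ∈ pstar.edges, e ∉ E') →
      ((∀ q : (G.deleteEdges ↑E').Walk s t, q.IsPath → walkLen w' pstar ≤ walkLen w' q) ↔
        (∀ q : G.Walk s t, q.IsPath → q ≠ pstar → ∃ e ∈ q.edges, e ∈ E'))) ∧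
    (∃ w'' : Sym2 V → ℝ, (∀ e, w' e ≤ w'' e) ∧ (∀ e ∈ pstar.edges, w'' e = w' e) ∧
      ∀ q : G.Walk s t, q.IsPath → q ≠ pstar → walkLen w'' pstar ≤ walkLen w'' q) :=
  stmt2_general G w' hw' s t pstar hps hlongest
end

section
/- In the chain-of-triangles gadget with published weights w', the minimum cost of an attack making p* (the bottom chain) the shortest s–t path equals ∑_{i∈Y} ν_i, where Y = {i : w'({u_{i-1},u_i}) ≥ w'({u_{i-1},ω_i}) + w'({ω_i,u_i})}. -/
open SimpleGraph

/-- Vertices of the chain-of-triangles gadget: `Sum.inl i` is `u_i`, `Sum.inr i` is `ω_{i+1}`. -/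
abbrev CV (n : ℕ) := Fin (n + 1) ⊕ Fin n

/-- The bottom edge `{u_{i-1}, u_i}` of the `i`-th triangle (on the target path). -/
def botE (n : ℕ) (i : Fin n) : Sym2 (CV n) := s(Sum.inl i.castSucc, Sum.inl i.succ)

/-- The detour edge `{u_{i-1}, ω_i}` of the `i`-th triangle. -/
def d1E (n : ℕ) (i : Fin n) : Sym2 (CV n) := s(Sum.inl i.castSucc, Sum.inr i)

/-- The detour edge `{ω_i, u_i}` of the `i`-th triangle. -/
def d2E (n : ℕ) (i : Fin n) : Sym2 (CV n) := s(Sum.inr i, Sum.inl i.succ)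

/-- The chain-of-triangles gadget graph. -/
def chainGraph (n : ℕ) : SimpleGraph (CV n) :=
  SimpleGraph.fromEdgeSet {e | ∃ i : Fin n, e = botE n i ∨ e = d1E n i ∨ e = d2E n i}

/-- Source `s = u_0`. -/
def src (n : ℕ) : CV n := Sum.inl 0

/-- Destination `t = u_n`. -/
def dst (n : ℕ) : CV n := Sum.inl (Fin.last n)

/-- An attack on the chain gadget: removable edges lie in the graph, no bottom edge
(edge of `p*`) is removed, and afterwards every simple `s`–`t` path other than the bottom
path `p*` (i.e. any path visiting some detour vertex `ω_i`) is strictly longer than `p*`. -/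
def IsChainAttack (n : ℕ) (w' : Sym2 (CV n) → ℝ) (E' : Finset (Sym2 (CV n))) : Prop :=
  ↑E' ⊆ (chainGraph n).edgeSet ∧ (∀ i : Fin n, botE n i ∉ E') ∧
    ∀ q : ((chainGraph n).deleteEdges ↑E').Walk (src n) (dst n), q.IsPath →
      (∃ i : Fin n, Sum.inr i ∈ q.support) →
      ∑ i : Fin n, w' (botE n i) < walkLen w' q

/-!
Every `s`–`t` walk crosses each triangle, either along its bottom edge or along both of its
detour edges, since the cuts `{level ≤ 2i}` and `{level ≤ 2i + 1}` separate `s` from `t`.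
Hence once `{u_{i-1}, ω_i}` is cut for every `i ∈ Y`, a path through some `ω_j` pays at least the
bottom edge in every triangle and strictly more in triangle `j`. Conversely, if an attack leaves
both detour edges of some `i ∈ Y`, substituting that detour into `p*` gives a path through `ω_i`
no longer than `p*`; so every attack pays at least `ν_i` in each triangle of `Y`.
-/

namespace SimpleGraph.Walk

variable {V : Type*} {G : SimpleGraph V}

section walkLen

variable (w : Sym2 V → ℝ)

@[simp] lemma walkLen_nil {u : V} : walkLen w (nil : G.Walk u u) = 0 := rfl

@[simp] lemma walkLen_cons {u v x : V} (h : G.Adj u v) (p : G.Walk v x) :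
    walkLen w (cons h p) = w s(u, v) + walkLen w p := by
  simp [walkLen]

@[simp] lemma walkLen_copy {u v u' v' : V} (p : G.Walk u v) (hu : u = u') (hv : v = v') :
    walkLen w (p.copy hu hv) = walkLen w p := by
  subst hu hv; rfl

@[simp] lemma walkLen_append {u v x : V} (p : G.Walk u v) (q : G.Walk v x) :
    walkLen w (p.append q) = walkLen w p + walkLen w q := by
  simp [walkLen, edges_append]

lemma walkLen_eq_sum_edges_toFinset [DecidableEq V] {u v : V} {p : G.Walk u v} (hp : p.IsPath) :
    walkLen w p = ∑ e ∈ p.edges.toFinset, w e :=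
  (List.sum_toFinset w hp.edges_nodup).symm

end walkLen

lemma le_of_forall_mem_darts_lt {α : Type*} [Preorder α] (f : V → α) {u v x : V}
    (p : G.Walk u v) (hp : ∀ d ∈ p.darts, f d.fst < f d.snd) (hx : x ∈ p.support) :
    f u ≤ f x := by
  induction p with
  | nil => rw [support_nil, List.mem_singleton] at hx; rw [hx]
  | cons h p ih =>
    rw [support_cons, List.mem_cons] at hx
    rw [darts_cons, List.forall_mem_cons] at hp
    rcases hx with rfl | hx
    · exact le_rfl
    · exact hp.1.le.trans (ih hp.2 hx)

lemma isPath_of_forall_mem_darts_lt {α : Type*} [Preorder α] (f : V → α) {u v : V}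
    (p : G.Walk u v) (hp : ∀ d ∈ p.darts, f d.fst < f d.snd) : p.IsPath := by
  induction p with
  | nil => exact IsPath.nil
  | cons h p ih =>
    rw [darts_cons, List.forall_mem_cons] at hp
    exact (ih hp.2).cons fun hu => (hp.1.trans_le (le_of_forall_mem_darts_lt f p hp.2 hu)).false

lemma IsPath.exists_ne_mem_edges_of_mem_support [DecidableEq V] {u v x : V} {p : G.Walk u v}
    (hp : p.IsPath) (hx : x ∈ p.support) (hxu : x ≠ u) (hxv : x ≠ v) :
    ∃ y z, y ≠ z ∧ s(x, y) ∈ p.edges ∧ s(x, z) ∈ p.edges := by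
  set p₁ := p.takeUntil x hx
  set p₂ := p.dropUntil x hx
  have h₁ : ¬p₁.Nil := fun h => hxu h.eq.symm
  have h₂ : ¬p₂.Nil := fun h => hxv h.eq
  have hdisj : ∀ e ∈ p₁.edges, ∀ e' ∈ p₂.edges, e ≠ e' := by
    have := hp.edges_nodup
    rw [← p.take_spec hx, edges_append, List.nodup_append] at this
    exact this.2.2
  refine ⟨p₁.penultimate, p₂.snd, fun h => ?_, ?_, ?_⟩
  · refine hdisj _ (mk_penultimate_end_mem_edges h₁) _ (mk_start_snd_mem_edges h₂) ?_
    rw [h, Sym2.eq_swap]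
  · rw [Sym2.eq_swap]
    exact p.edges_takeUntil_subset_edges hx (mk_penultimate_end_mem_edges h₁)
  · exact p.edges_dropUntil_subset_edges hx (mk_start_snd_mem_edges h₂)

def ofSteps : {m : ℕ} → (v : Fin (m + 1) → V) → (∀ j : Fin m, G.Walk (v j.castSucc) (v j.succ)) →
    G.Walk (v 0) (v (Fin.last m))
  | 0, _, _ => nil
  | _ + 1, v, step =>
    ((step 0).append (ofSteps (fun j => v j.succ) (fun j => step j.succ))).copy
      (congrArg v Fin.castSucc_zero) rfl

lemma walkLen_ofSteps (w : Sym2 V → ℝ) {m : ℕ} (v : Fin (m + 1) → V)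
    (step : ∀ j : Fin m, G.Walk (v j.castSucc) (v j.succ)) :
    walkLen w (ofSteps v step) = ∑ j, walkLen w (step j) := by
  induction m with
  | zero => rfl
  | succ m ih => rw [ofSteps, walkLen_copy, walkLen_append, ih, Fin.sum_univ_succ]

lemma mem_darts_ofSteps {m : ℕ} (v : Fin (m + 1) → V)
    (step : ∀ j : Fin m, G.Walk (v j.castSucc) (v j.succ)) {d : G.Dart} :
    d ∈ (ofSteps v step).darts ↔ ∃ j, d ∈ (step j).darts := by
  induction m with
  | zero => simp [ofSteps]
  | succ m ih => rw [ofSteps, darts_copy, darts_append, List.mem_append, ih, Fin.exists_fin_succ]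

end SimpleGraph.Walk

open Finset

section ChainGadget

variable {n : ℕ}

def triangle (n : ℕ) (i : Fin n) : Finset (Sym2 (CV n)) := {botE n i, d1E n i, d2E n i}

lemma mem_triangle {e : Sym2 (CV n)} {i : Fin n} :
    e ∈ triangle n i ↔ e = botE n i ∨ e = d1E n i ∨ e = d2E n i := by
  simp [triangle]

@[simp] lemma botE_mem_triangle (i : Fin n) : botE n i ∈ triangle n i := by simp [triangle]

@[simp] lemma d1E_mem_triangle (i : Fin n) : d1E n i ∈ triangle n i := by simp [triangle]

@[simp] lemma d2E_mem_triangle (i : Fin n) : d2E n i ∈ triangle n i := by simp [triangle]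

lemma eq_of_mem_triangle {e : Sym2 (CV n)} {i j : Fin n} (hi : e ∈ triangle n i)
    (hj : e ∈ triangle n j) : i = j := by
  rw [mem_triangle] at hi hj
  rcases hi with rfl | rfl | rfl <;> rcases hj with h | h | h <;>
    simp [botE, d1E, d2E, Fin.ext_iff] at h <;> omega

lemma d1E_ne_d2E (i : Fin n) : d1E n i ≠ d2E n i := by
  simp [d1E, d2E, Fin.ext_iff]

lemma botE_ne_d1E (i j : Fin n) : botE n i ≠ d1E n j := by
  simp [botE, d1E]

lemma d1E_injective : Function.Injective (d1E n) := fun i j h =>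
  eq_of_mem_triangle (d1E_mem_triangle i) (h ▸ d1E_mem_triangle j)

lemma sum_sum_inter_triangle_le {f : Sym2 (CV n) → ℝ} {F : Finset (Sym2 (CV n))}
    (hf : ∀ e ∈ F, 0 ≤ f e) (s : Finset (Fin n)) :
    ∑ i ∈ s, ∑ e ∈ F ∩ triangle n i, f e ≤ ∑ e ∈ F, f e := by
  rw [← sum_biUnion fun i _ j _ hij => disjoint_left.2 fun e hi hj =>
    hij (eq_of_mem_triangle (mem_inter.1 hi).2 (mem_inter.1 hj).2)]
  exact sum_le_sum_of_subset_of_nonneg (biUnion_subset.2 fun i _ => inter_subset_left)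
    fun e he _ => hf e he

lemma mem_edgeSet_chainGraph {e : Sym2 (CV n)} :
    e ∈ (chainGraph n).edgeSet ↔ ∃ i, e ∈ triangle n i := by
  simp only [chainGraph, edgeSet_fromEdgeSet, Set.mem_sdiff, Set.mem_ofPred_eq, mem_triangle,
    and_iff_left_iff_imp]
  rintro ⟨i, rfl | rfl | rfl⟩ <;> simp [botE, d1E, d2E, Fin.ext_iff]

lemma chainGraph_adj {x y : CV n} : (chainGraph n).Adj x y ↔ ∃ i, s(x, y) ∈ triangle n i :=
  mem_edgeSet_chainGraph (e := s(x, y))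

lemma deleteEdges_chainGraph_adj {E : Set (Sym2 (CV n))} {x y : CV n} {i : Fin n}
    (hi : s(x, y) ∈ triangle n i) (hE : s(x, y) ∉ E) : ((chainGraph n).deleteEdges E).Adj x y :=
  deleteEdges_adj.2 ⟨chainGraph_adj.2 ⟨i, hi⟩, hE⟩

/-- Every edge of triangle `i` joins two of the levels `2i`, `2i + 1`, `2i + 2`, so the cut
`{level ≤ r}` is crossed only inside triangle `r / 2`. -/
def level : CV n → ℕ := Sum.elim (fun k => 2 * k) (fun i => 2 * i + 1)

@[simp] lemma level_inl (k : Fin (n + 1)) : level (Sum.inl k : CV n) = 2 * k := rfl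

@[simp] lemma level_inr (i : Fin n) : level (Sum.inr i : CV n) = 2 * i + 1 := rfl

lemma exists_level_crossing_mem_edges {H : SimpleGraph (CV n)} (hH : H ≤ chainGraph n)
    (q : H.Walk (src n) (dst n)) {r : ℕ} (hr : r < 2 * n) :
    ∃ x y, (chainGraph n).Adj x y ∧ level x ≤ r ∧ r < level y ∧ s(x, y) ∈ q.edges := by
  obtain ⟨d, hd, hx, hy⟩ :=
    q.exists_boundary_dart {v | level v ≤ r} (by simp [src]) (by simpa [dst] using hr)
  exact ⟨d.fst, d.snd, hH d.adj, hx, not_le.1 hy, List.mem_map_of_mem hd⟩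

lemma eq_botE_or_eq_d1E_of_level {x y : CV n} (h : (chainGraph n).Adj x y) (i : Fin n)
    (hx : level x ≤ 2 * i) (hy : 2 * i < level y) : s(x, y) = botE n i ∨ s(x, y) = d1E n i := by
  obtain ⟨j, hj⟩ := chainGraph_adj.1 h
  simp only [mem_triangle, botE, d1E, d2E, Sym2.eq_iff] at hj
  rcases hj with (⟨rfl, rfl⟩ | ⟨rfl, rfl⟩) | (⟨rfl, rfl⟩ | ⟨rfl, rfl⟩) |
      (⟨rfl, rfl⟩ | ⟨rfl, rfl⟩) <;>
    simp only [level_inl, level_inr, Fin.val_castSucc, Fin.val_succ] at hx hy <;> (try omega) <;>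
    obtain rfl : j = i := Fin.ext (by omega) <;> simp [botE, d1E]

lemma eq_botE_or_eq_d2E_of_level {x y : CV n} (h : (chainGraph n).Adj x y) (i : Fin n)
    (hx : level x ≤ 2 * i + 1) (hy : 2 * i + 1 < level y) :
    s(x, y) = botE n i ∨ s(x, y) = d2E n i := by
  obtain ⟨j, hj⟩ := chainGraph_adj.1 h
  simp only [mem_triangle, botE, d1E, d2E, Sym2.eq_iff] at hj
  rcases hj with (⟨rfl, rfl⟩ | ⟨rfl, rfl⟩) | (⟨rfl, rfl⟩ | ⟨rfl, rfl⟩) |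
      (⟨rfl, rfl⟩ | ⟨rfl, rfl⟩) <;>
    simp only [level_inl, level_inr, Fin.val_castSucc, Fin.val_succ] at hx hy <;> (try omega) <;>
    obtain rfl : j = i := Fin.ext (by omega) <;> simp [botE, d2E]

lemma eq_or_eq_of_chainGraph_adj_inr {i : Fin n} {y : CV n} (h : (chainGraph n).Adj (Sum.inr i) y) :
    y = Sum.inl i.castSucc ∨ y = Sum.inl i.succ := by
  obtain ⟨j, hj⟩ := chainGraph_adj.1 h
  simp only [mem_triangle, botE, d1E, d2E, Sym2.eq_iff, reduceCtorEq, Sum.inr.injEq, false_and,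
    or_false, false_or] at hj
  rcases hj with ⟨rfl, rfl⟩ | ⟨rfl, rfl⟩ <;> simp

lemma botE_mem_edges_or_detour_mem_edges {H : SimpleGraph (CV n)} (hH : H ≤ chainGraph n)
    (q : H.Walk (src n) (dst n)) (i : Fin n) :
    botE n i ∈ q.edges ∨ d1E n i ∈ q.edges ∧ d2E n i ∈ q.edges := by
  obtain ⟨x, y, hxy, hx, hy, hq⟩ := exists_level_crossing_mem_edges hH q (r := 2 * i) (by omega)
  obtain ⟨x', y', hxy', hx', hy', hq'⟩ :=
    exists_level_crossing_mem_edges hH q (r := 2 * i + 1) (by omega)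
  rcases eq_botE_or_eq_d1E_of_level hxy i hx hy with h | h
  · exact .inl (h ▸ hq)
  rcases eq_botE_or_eq_d2E_of_level hxy' i hx' hy' with h' | h'
  · exact .inl (h' ▸ hq')
  · exact .inr ⟨h ▸ hq, h' ▸ hq'⟩

lemma detour_mem_edges_of_inr_mem_support {H : SimpleGraph (CV n)} (hH : H ≤ chainGraph n)
    {q : H.Walk (src n) (dst n)} (hq : q.IsPath) {i : Fin n} (hi : Sum.inr i ∈ q.support) :
    d1E n i ∈ q.edges ∧ d2E n i ∈ q.edges := by
  obtain ⟨y, z, hyz, hy, hz⟩ :=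
    hq.exists_ne_mem_edges_of_mem_support hi (by simp [src]) (by simp [dst])
  have hd1 : s(Sum.inr i, Sum.inl i.castSucc) = d1E n i := Sym2.eq_swap
  rcases eq_or_eq_of_chainGraph_adj_inr (hH (q.adj_of_mem_edges hy)) with rfl | rfl <;>
    rcases eq_or_eq_of_chainGraph_adj_inr (hH (q.adj_of_mem_edges hz)) with rfl | rfl
  · exact absurd rfl hyz
  · exact ⟨hd1 ▸ hy, hz⟩
  · exact ⟨hd1 ▸ hz, hy⟩
  · exact absurd rfl hyz

lemma exists_isPath_detour {H : SimpleGraph (CV n)} (w : Sym2 (CV n) → ℝ) (D : Finset (Fin n))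
    (hbot : ∀ i ∉ D, H.Adj (Sum.inl i.castSucc) (Sum.inl i.succ))
    (hdet : ∀ i ∈ D, H.Adj (Sum.inl i.castSucc) (Sum.inr i) ∧ H.Adj (Sum.inr i) (Sum.inl i.succ)) :
    ∃ q : H.Walk (src n) (dst n), q.IsPath ∧ (∀ i ∈ D, Sum.inr i ∈ q.support) ∧
      walkLen w q = ∑ i, if i ∈ D then w (d1E n i) + w (d2E n i) else w (botE n i) := by
  let step (i : Fin n) : H.Walk (Sum.inl i.castSucc) (Sum.inl i.succ) :=
    if h : i ∈ D then .cons (hdet i h).1 (.cons (hdet i h).2 .nil) else .cons (hbot i h) .nil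
  have hstep : ∀ i, ∀ d ∈ (step i).darts, level d.fst < level d.snd := by
    intro i d hd
    by_cases h : i ∈ D <;> simp only [step, h, dite_true, dite_false, Walk.darts_cons,
      Walk.darts_nil, List.mem_cons, List.not_mem_nil, or_false] at hd <;>
      rcases hd with rfl | rfl <;>
      simp only [level_inl, level_inr, Fin.val_castSucc, Fin.val_succ] <;> omega
  refine ⟨Walk.ofSteps Sum.inl step, ?_, fun i hi => ?_, ?_⟩
  · refine Walk.isPath_of_forall_mem_darts_lt level _ fun d hd => ?_
    obtain ⟨i, hi⟩ := (Walk.mem_darts_ofSteps _ _).1 hd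
    exact hstep i d hi
  · refine Walk.dart_snd_mem_support_of_mem_darts _ ((Walk.mem_darts_ofSteps _ _).2 ⟨i, ?_⟩)
      (d := ⟨(_, _), (hdet i hi).1⟩)
    simp [step, hi]
  · refine (Walk.walkLen_ofSteps w Sum.inl step).trans (sum_congr rfl fun i _ => ?_)
    by_cases h : i ∈ D <;> simp [step, h, botE, d1E, d2E]

lemma isChainAttack_image_d1E {w : Sym2 (CV n) → ℝ} (hw : ∀ e, 0 ≤ w e) (Y : Finset (Fin n))
    (hY : ∀ i ∉ Y, w (botE n i) < w (d1E n i) + w (d2E n i)) :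
    IsChainAttack n w (Y.image (d1E n)) := by
  refine ⟨?_, fun i h => ?_, fun q hq ⟨j, hj⟩ => ?_⟩
  · simp only [coe_image, Set.image_subset_iff]
    exact fun i _ => chainGraph_adj.2 ⟨i, d1E_mem_triangle i⟩
  · obtain ⟨k, -, hk⟩ := mem_image.1 h
    exact botE_ne_d1E i k hk.symm
  have hH : (chainGraph n).deleteEdges ↑(Y.image (d1E n)) ≤ chainGraph n := deleteEdges_le _
  set F := q.edges.toFinset
  have detour_lt : ∀ i, d1E n i ∈ q.edges → d2E n i ∈ q.edges →
      w (botE n i) < ∑ e ∈ F ∩ triangle n i, w e := by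
    intro i h1 h2
    have hiY : i ∉ Y := fun hi => by
      have h1' := q.edges_subset_edgeSet h1
      rw [edgeSet_deleteEdges] at h1'
      exact h1'.2 (mem_coe.2 (mem_image_of_mem _ hi))
    calc w (botE n i) < w (d1E n i) + w (d2E n i) := hY i hiY
      _ = ∑ e ∈ {d1E n i, d2E n i}, w e := (sum_pair (d1E_ne_d2E i)).symm
      _ ≤ ∑ e ∈ F ∩ triangle n i, w e :=
        sum_le_sum_of_subset_of_nonneg (by simp [insert_subset_iff, F, triangle, h1, h2])
          fun e _ _ => hw e
  have bot_le : ∀ i, w (botE n i) ≤ ∑ e ∈ F ∩ triangle n i, w e := by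
    intro i
    rcases botE_mem_edges_or_detour_mem_edges hH q i with h | ⟨h1, h2⟩
    · exact single_le_sum (fun e _ => hw e) (by simp [F, triangle, h])
    · exact (detour_lt i h1 h2).le
  calc ∑ i, w (botE n i) < ∑ i, ∑ e ∈ F ∩ triangle n i, w e :=
        sum_lt_sum (fun i _ => bot_le i)
          ⟨j, mem_univ j, detour_lt j (detour_mem_edges_of_inr_mem_support hH hq hj).1
            (detour_mem_edges_of_inr_mem_support hH hq hj).2⟩
    _ ≤ ∑ e ∈ F, w e := sum_sum_inter_triangle_le (fun e _ => hw e) univ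
    _ = walkLen w q := (Walk.walkLen_eq_sum_edges_toFinset w hq).symm

lemma IsChainAttack.cuts_detour {w : Sym2 (CV n) → ℝ} {E' : Finset (Sym2 (CV n))}
    (hE : IsChainAttack n w E') {i : Fin n}
    (hi : w (d1E n i) + w (d2E n i) ≤ w (botE n i)) : d1E n i ∈ E' ∨ d2E n i ∈ E' := by
  by_contra! h
  obtain ⟨q, hq, hω, hlen⟩ := exists_isPath_detour (H := (chainGraph n).deleteEdges E') w {i}
    (fun j _ => deleteEdges_chainGraph_adj (botE_mem_triangle j) (hE.2.1 j)) fun j hj => by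
      rw [mem_singleton.1 hj]
      exact ⟨deleteEdges_chainGraph_adj (d1E_mem_triangle i) h.1,
        deleteEdges_chainGraph_adj (d2E_mem_triangle i) h.2⟩
  have hlt := hE.2.2 q hq ⟨i, hω i (mem_singleton_self i)⟩
  rw [hlen] at hlt
  refine hlt.not_ge (sum_le_sum fun j _ => ?_)
  split_ifs with hj
  · exact mem_singleton.1 hj ▸ hi
  · exact le_rfl

lemma IsChainAttack.sum_le_sum_cost {w : Sym2 (CV n) → ℝ} {E' : Finset (Sym2 (CV n))}
    (hE : IsChainAttack n w E') {c : Sym2 (CV n) → ℝ} {ν : Fin n → ℝ} (hν : ∀ i, 0 ≤ ν i)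
    (hc1 : ∀ i, c (d1E n i) = ν i) (hc2 : ∀ i, c (d2E n i) = ν i)
    {Y : Finset (Fin n)} (hY : ∀ i ∈ Y, w (d1E n i) + w (d2E n i) ≤ w (botE n i)) :
    ∑ i ∈ Y, ν i ≤ ∑ e ∈ E', c e := by
  have cost_eq : ∀ i, ∀ e ∈ E' ∩ triangle n i, c e = ν i := by
    intro i e he
    obtain ⟨he, hei⟩ := mem_inter.1 he
    rcases mem_triangle.1 hei with rfl | rfl | rfl
    · exact absurd he (hE.2.1 i)
    · exact hc1 i
    · exact hc2 i
  have cost_nonneg : ∀ e ∈ E', 0 ≤ c e := fun e he => by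
    obtain ⟨i, hi⟩ := mem_edgeSet_chainGraph.1 (hE.1 he)
    exact cost_eq i e (mem_inter.2 ⟨he, hi⟩) ▸ hν i
  calc ∑ i ∈ Y, ν i ≤ ∑ i ∈ Y, ∑ e ∈ E' ∩ triangle n i, c e := sum_le_sum fun i hi => by
        obtain ⟨e, he, hei⟩ : ∃ e ∈ E', e ∈ triangle n i := by
          rcases hE.cuts_detour (hY i hi) with h | h
          exacts [⟨_, h, d1E_mem_triangle i⟩, ⟨_, h, d2E_mem_triangle i⟩]
        rw [← cost_eq i e (mem_inter.2 ⟨he, hei⟩)]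
        exact single_le_sum (fun e he => cost_eq i e he ▸ hν i) (mem_inter.2 ⟨he, hei⟩)
    _ ≤ ∑ e ∈ E', c e := sum_sum_inter_triangle_le cost_nonneg Y

end ChainGadget

/-- In the chain gadget with published weights `w'`, the minimum cost of an attack making
the bottom path `p*` the shortest `s`–`t` path equals `∑_{i∈Y} ν_i`, where
`Y = {i : w'({u_{i-1},u_i}) ≥ w'({u_{i-1},ω_i}) + w'({ω_i,u_i})}`. -/
theorem stmt8 (n : ℕ) (w' c : Sym2 (CV n) → ℝ) (ν : Fin n → ℝ)
    (hw' : ∀ e, 0 < w' e) (hν : ∀ i, 0 < ν i)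
    (hc1 : ∀ i, c (d1E n i) = ν i) (hc2 : ∀ i, c (d2E n i) = ν i)
    (Y : Finset (Fin n))
    (hY : ∀ i, i ∈ Y ↔ w' (d1E n i) + w' (d2E n i) ≤ w' (botE n i)) :
    (∃ E', IsChainAttack n w' E' ∧ ∑ e ∈ E', c e = ∑ i ∈ Y, ν i) ∧
      ∀ E', IsChainAttack n w' E' → ∑ i ∈ Y, ν i ≤ ∑ e ∈ E', c e := by
  refine ⟨⟨Y.image (d1E n), ?_, ?_⟩, fun E' hE => ?_⟩
  · exact isChainAttack_image_d1E (fun e => (hw' e).le) Y fun i hi => not_le.1 (mt (hY i).2 hi)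
  · rw [sum_image fun i _ j _ h => d1E_injective h]
    exact sum_congr rfl fun i _ => hc1 i
  · exact hE.sum_le_sum_cost (fun i => (hν i).le) hc1 hc2 fun i => (hY i).1
end
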